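/- Let N be a left A-module, equip Hom_k(H, N) with the left A-module structure (a·φ)(x) = a₍₀₎·φ(S(a₍₁₎) x a₍₋₁₎), and equip Hom_k(H, Hom_k(H, N)) with the same construction applied to the A-module Hom_k(H, N). Define m : Hom_k(H, Hom_k(H, N)) → Hom_k(H, N) by m(Φ)(h) = Φ(h⁽¹⁾)(h⁽²⁾). Then: (i) m is A-linear; (ii) m satisfies the unit laws m(h ↦ ε(h)φ) = φ and m(h ↦ (x ↦ ε(x)φ(h))) = φ for all φ ∈ Hom_k(H, N); (iii) m is associative: for every k-linear Ψ : H → Hom_k(H, Hom_k(H, N)), m(h ↦ m(Ψ(h))) = m(h ↦ Ψ(h⁽¹⁾)(h⁽²⁾)), both sides being h ↦ Ψ(h⁽¹⁾)(h⁽²⁾)(h⁽³⁾). In particular N ↦ Hom_k(H, N), with this multiplication and the unit n ↦ (h ↦ ε(h)n), is a monad on left A-modules. -/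

import Mathlib

/-!
Write `δ a = a₍₀₎ ⊗ (S(a₍₁₎) ⊗ a₍₋₁₎) ∈ A ⊗ (H ⊗ H)` (`deltaS`) and let `H ⊗ H` act on `H` by
`(u ⊗ v) · x = u x v`, so that `(a · φ)(x) = ∑ aᵢ · φ(wᵢ · x)` when `δ a = ∑ aᵢ ⊗ wᵢ`.  Since `Δ` is
multiplicative, `Δ(w · x) = w₍₁₎ · x₍₁₎ ⊗ w₍₂₎ · x₍₂₎` for the tensor product coalgebra `H ⊗ H`;
hence `m` intertwines the two actions as soon as `δ` is coassociative for the *opposite*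
comultiplication of `H ⊗ H`.  That coassociativity is where the bicomodule axioms enter: they
make `a ↦ a₍₋₁₎ ⊗ a₍₀₎ ⊗ a₍₁₎` coassociative on both outer legs, and `Δ(S h) = S(h₍₂₎) ⊗ S(h₍₁₎)`
turns this into the opposite coassociativity of `δ`.

The unit and associativity laws only involve `H`: `m Φ = Φ̃ ∘ Δ` for the linearization
`Φ̃ : H ⊗ H → W` of `Φ`, so they are the counit and coassociativity laws of `Δ`.
-/

open TensorProduct

noncomputable section

variable (k : Type) [Field k]

/-- The curried action of a `k`-algebra `R` on a module `V`, as a `k`-bilinear map. -/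
def csmul (R : Type) [Ring R] [Algebra k R] (V : Type) [AddCommGroup V] [Module k V]
    [Module R V] [IsScalarTower k R V] [SMulCommClass k R V] : R →ₗ[k] V →ₗ[k] V where
  toFun r :=
    { toFun := fun v => r • v
      map_add' := smul_add r
      map_smul' := fun c v => (smul_comm c r v).symm }
  map_add' r r' := LinearMap.ext fun v => add_smul r r' v
  map_smul' c r := LinearMap.ext fun v => smul_assoc c r v

variable (H : Type) [Ring H] [HopfAlgebra k H]

/-- `H ⊗ H →ₗ End_k(H)`, `u ⊗ v ↦ (x ↦ u * x * v)`. -/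
def sandwich : H ⊗[k] H →ₗ[k] (H →ₗ[k] H) :=
  (TensorProduct.lift (LinearMap.llcomp k H H H)) ∘ₗ
    (TensorProduct.map (LinearMap.mul k H) (LinearMap.mul k H).flip)

/-- `H ⊗ H →ₗ End_k(Hom_k(H, W))`, `u ⊗ v ↦ (φ ↦ (x ↦ φ (u * x * v)))`. -/
def sandwichHom (W : Type) [AddCommGroup W] [Module k W] :
    H ⊗[k] H →ₗ[k] (H →ₗ[k] W) →ₗ[k] (H →ₗ[k] W) :=
  (LinearMap.llcomp k H H W).flip ∘ₗ sandwich k H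

variable (A : Type) [Ring A] [Algebra k A]
variable (ρ : A →ₐ[k] A ⊗[k] H) (lco : A →ₐ[k] H ⊗[k] A)

/-- `A →ₗ A ⊗ (H ⊗ H)`, `a ↦ a₍₀₎ ⊗ (S(a₍₁₎) ⊗ a₍₋₁₎)`. -/
def deltaS : A →ₗ[k] A ⊗[k] (H ⊗[k] H) :=
  (LinearMap.lTensor A (LinearMap.rTensor H (HopfAlgebra.antipode (R := k)))) ∘ₗ
    (LinearMap.lTensor A (TensorProduct.comm k H H).toLinearMap) ∘ₗ
    (TensorProduct.assoc k A H H).toLinearMap ∘ₗ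
    (LinearMap.rTensor H (TensorProduct.comm k H A).toLinearMap) ∘ₗ
    (LinearMap.rTensor H lco.toLinearMap) ∘ₗ ρ.toLinearMap

/-- Given a curried action `ν : A →ₗ End_k(W)`, the induced action of `A` on `Hom_k(H, W)`:
`(a · φ)(x) = ν(a₍₀₎) (φ (S(a₍₁₎) * x * a₍₋₁₎))`. -/
def liftAct (W : Type) [AddCommGroup W] [Module k W] (ν : A →ₗ[k] W →ₗ[k] W) :
    A →ₗ[k] (H →ₗ[k] W) →ₗ[k] (H →ₗ[k] W) :=
  (TensorProduct.lift
      (((LinearMap.llcomp k (H →ₗ[k] W) (H →ₗ[k] W) (H →ₗ[k] W)).comp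
          ((LinearMap.llcomp k H W W) ∘ₗ ν)).compl₂ (sandwichHom k H W))) ∘ₗ
    deltaS k H A ρ lco

/-- Evaluation `Hom_k(H, W) ⊗ H →ₗ W`, `φ ⊗ h ↦ φ h`. -/
def evalMap (W : Type) [AddCommGroup W] [Module k W] :
    (H →ₗ[k] W) ⊗[k] H →ₗ[k] W :=
  TensorProduct.lift LinearMap.id

/-- The monad multiplication `m : Hom_k(H, Hom_k(H, W)) →ₗ Hom_k(H, W)`,
`m(Φ)(h) = Φ(h⁽¹⁾)(h⁽²⁾)`. -/
def Mmap (W : Type) [AddCommGroup W] [Module k W] :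
    (H →ₗ[k] (H →ₗ[k] W)) →ₗ[k] (H →ₗ[k] W) :=
  (LinearMap.lcomp k W (Coalgebra.comul (R := k) (A := H))) ∘ₗ
    (LinearMap.llcomp k (H ⊗[k] H) ((H →ₗ[k] W) ⊗[k] H) W (evalMap k H W)) ∘ₗ
    (LinearMap.rTensorHom (M := H) (N := H) (P := H →ₗ[k] W))

/-- The monad unit `u : W →ₗ Hom_k(H, W)`, `u(w)(h) = ε(h) • w`. -/
def unitMap (W : Type) [AddCommGroup W] [Module k W] : W →ₗ[k] (H →ₗ[k] W) where
  toFun w := (Coalgebra.counit (R := k) (A := H)).smulRight w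
  map_add' w w' := by ext x; simp
  map_smul' c w := by ext x; simp [smul_smul, mul_comm]

section MonadLaws

open Coalgebra

variable {k H} {W : Type} [AddCommGroup W] [Module k W]

theorem Mmap_eq_lift_comp_comul (Φ : H →ₗ[k] H →ₗ[k] W) :
    Mmap k H W Φ = TensorProduct.lift Φ ∘ₗ comul := by
  change (evalMap k H W ∘ₗ LinearMap.rTensor H Φ) ∘ₗ comul = _
  congr 1
  ext x y
  rfl

theorem Mmap_compr₂ {W' : Type} [AddCommGroup W'] [Module k W'] (Φ : H →ₗ[k] H →ₗ[k] W)
    (f : W →ₗ[k] W') : Mmap k H W' (Φ.compr₂ f) = f ∘ₗ Mmap k H W Φ := by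
  rw [Mmap_eq_lift_comp_comul, Mmap_eq_lift_comp_comul, TensorProduct.lift_compr₂,
    LinearMap.comp_assoc]

theorem Mmap_unitMap (φ : H →ₗ[k] W) : Mmap k H W (unitMap k H (H →ₗ[k] W) φ) = φ := by
  have hlift : TensorProduct.lift (unitMap k H (H →ₗ[k] W) φ) =
      φ ∘ₗ (TensorProduct.lid k H).toLinearMap ∘ₗ LinearMap.rTensor H counit := by
    ext x y; simp [unitMap]
  rw [Mmap_eq_lift_comp_comul, hlift, LinearMap.comp_assoc, LinearMap.comp_assoc,
    rTensor_counit_comp_comul]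
  ext; simp

theorem Mmap_unitMap_comp (φ : H →ₗ[k] W) : Mmap k H W (unitMap k H W ∘ₗ φ) = φ := by
  have hlift : TensorProduct.lift (unitMap k H W ∘ₗ φ) =
      φ ∘ₗ (TensorProduct.rid k H).toLinearMap ∘ₗ LinearMap.lTensor H counit := by
    ext x y; simp [unitMap]
  rw [Mmap_eq_lift_comp_comul, hlift, LinearMap.comp_assoc, LinearMap.comp_assoc,
    lTensor_counit_comp_comul]
  ext; simp

theorem Mmap_Mmap_comp (Ψ : H →ₗ[k] H →ₗ[k] H →ₗ[k] W) :
    Mmap k H W (Mmap k H W ∘ₗ Ψ) = Mmap k H W (Mmap k H (H →ₗ[k] W) Ψ) := by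
  let Ψ₃ := TensorProduct.lift (TensorProduct.uncurry (.id k) H H W ∘ₗ Ψ)
  have hleft : TensorProduct.lift (Mmap k H W ∘ₗ Ψ) = Ψ₃ ∘ₗ LinearMap.lTensor H comul := by
    ext x y; simp [Ψ₃, Mmap_eq_lift_comp_comul]; rfl
  have hright : TensorProduct.lift (Mmap k H (H →ₗ[k] W) Ψ) =
      Ψ₃ ∘ₗ (TensorProduct.assoc k H H H).toLinearMap ∘ₗ LinearMap.rTensor H comul := by
    have (z : H ⊗[k] H) (y : H) :
        TensorProduct.lift Ψ z y = Ψ₃ (TensorProduct.assoc k H H H (z ⊗ₜ y)) := by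
      induction z using TensorProduct.induction_on <;> simp_all [Ψ₃, TensorProduct.add_tmul]
    ext x y
    simp only [Mmap_eq_lift_comp_comul]
    exact this _ _
  ext h
  rw [Mmap_eq_lift_comp_comul, Mmap_eq_lift_comp_comul, hleft, hright]
  simp

end MonadLaws

section Equivariance

open Coalgebra

variable {k H} {W : Type} [AddCommGroup W] [Module k W] {M : Type} [AddCommMonoid M] [Module k M]

@[simp] theorem sandwich_tmul (u v x : H) : sandwich k H (u ⊗ₜ v) x = u * (x * v) := rfl

@[simp] theorem sandwichHom_apply (w : H ⊗[k] H) (φ : H →ₗ[k] W) :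
    sandwichHom k H W w φ = φ ∘ₗ sandwich k H w := rfl

def sandwichAct (ν : M →ₗ[k] W →ₗ[k] W) :
    M ⊗[k] (H ⊗[k] H) →ₗ[k] (H →ₗ[k] W) →ₗ[k] (H →ₗ[k] W) :=
  TensorProduct.lift (((LinearMap.llcomp k (H →ₗ[k] W) (H →ₗ[k] W) (H →ₗ[k] W)).comp
    ((LinearMap.llcomp k H W W) ∘ₗ ν)).compl₂ (sandwichHom k H W))

@[simp] theorem sandwichAct_tmul (ν : M →ₗ[k] W →ₗ[k] W) (m : M) (w : H ⊗[k] H)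
    (φ : H →ₗ[k] W) : sandwichAct ν (m ⊗ₜ w) φ = ν m ∘ₗ φ ∘ₗ sandwich k H w := rfl

theorem liftAct_eq_sandwichAct_comp (ν : A →ₗ[k] W →ₗ[k] W) :
    liftAct k H A ρ lco W ν = sandwichAct ν ∘ₗ deltaS k H A ρ lco := rfl

def sandwichActMmap (ν : M →ₗ[k] W →ₗ[k] W) :
    M ⊗[k] ((H ⊗[k] H) ⊗[k] (H ⊗[k] H)) →ₗ[k] (H →ₗ[k] H →ₗ[k] W) →ₗ[k] (H →ₗ[k] W) :=
  TensorProduct.lift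
    (((LinearMap.llcomp k (H →ₗ[k] H →ₗ[k] W) (H →ₗ[k] W) (H →ₗ[k] W)).comp
      ((LinearMap.llcomp k H W W) ∘ₗ ν)).compl₂
      (LinearMap.llcomp k _ _ _ (Mmap k H W) ∘ₗ sandwichAct (sandwichHom k H W)))

@[simp] theorem sandwichActMmap_tmul (ν : M →ₗ[k] W →ₗ[k] W) (m : M)
    (q : (H ⊗[k] H) ⊗[k] (H ⊗[k] H)) (Φ : H →ₗ[k] H →ₗ[k] W) :
    sandwichActMmap ν (m ⊗ₜ q) Φ = ν m ∘ₗ Mmap k H W (sandwichAct (sandwichHom k H W) q Φ) :=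
  rfl

theorem Mmap_comp_sandwichAct_comp (ν : M →ₗ[k] W →ₗ[k] W)
    (δ : M →ₗ[k] M ⊗[k] (H ⊗[k] H)) (t : M ⊗[k] (H ⊗[k] H)) :
    Mmap k H W ∘ₗ sandwichAct (sandwichAct ν ∘ₗ δ) t =
      sandwichActMmap ν (TensorProduct.assoc k _ _ _ (LinearMap.rTensor _ δ t)) := by
  induction t using TensorProduct.induction_on with
  | zero => simp
  | add t t' ht ht' => simp [LinearMap.comp_add, ht, ht']
  | tmul m w =>
    ext1 Φ
    simp only [LinearMap.comp_apply, sandwichAct_tmul, LinearMap.rTensor_tmul]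
    induction δ m using TensorProduct.induction_on with
    | zero => simp
    | add s s' hs hs' => simp [LinearMap.add_comp, TensorProduct.add_tmul, hs, hs']
    | tmul m' w' => exact Mmap_compr₂ (sandwichHom k H W w' ∘ₗ Φ ∘ₗ sandwich k H w) (ν m')

/-- `H` is a module coalgebra over `H ⊗ H`: `Δ (u x v) = Δu · Δx · Δv`. -/
theorem Mmap_comp_sandwich (Φ : H →ₗ[k] H →ₗ[k] W) (w : H ⊗[k] H) :
    Mmap k H W Φ ∘ₗ sandwich k H w =
      Mmap k H W (sandwichAct (sandwichHom k H W) (TensorProduct.comm k _ _ (comul w)) Φ) := by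
  have hsandwich : TensorProduct.uncurry (.id k) H H W ∘ₗ
      (sandwichAct (sandwichHom k H W)).flip Φ ∘ₗ (TensorProduct.comm k _ _).toLinearMap ∘ₗ
        (TensorProduct.tensorTensorTensorComm k H H H H).toLinearMap =
      LinearMap.llcomp k _ _ _ (TensorProduct.lift Φ) ∘ₗ sandwich k (H ⊗[k] H) := by
    ext u₁ u₂ v₁ v₂ x y
    simp
  induction w using TensorProduct.induction_on with
  | zero => simp
  | add w w' hw hw' => simp [LinearMap.comp_add, hw, hw']
  | tmul u v =>
    ext h
    simp only [Mmap_eq_lift_comp_comul, LinearMap.comp_apply, sandwich_tmul, Bialgebra.comul_mul]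
    exact (LinearMap.congr_fun
      (LinearMap.congr_fun hsandwich (comul u ⊗ₜ comul v)) (comul h)).symm

theorem sandwichAct_comp_Mmap (ν : M →ₗ[k] W →ₗ[k] W) (t : M ⊗[k] (H ⊗[k] H)) :
    sandwichAct ν t ∘ₗ Mmap k H W =
      sandwichActMmap ν
        (LinearMap.lTensor M ((TensorProduct.comm k _ _).toLinearMap ∘ₗ comul) t) := by
  induction t using TensorProduct.induction_on with
  | zero => simp
  | add t t' ht ht' => simp [LinearMap.add_comp, ht, ht']
  | tmul m w =>
    ext1 Φ
    simp [← Mmap_comp_sandwich]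

theorem Mmap_comp_sandwichAct_of_coassoc (ν : M →ₗ[k] W →ₗ[k] W)
    (δ : M →ₗ[k] M ⊗[k] (H ⊗[k] H))
    (hδ : (TensorProduct.assoc k _ _ _).toLinearMap ∘ₗ LinearMap.rTensor _ δ ∘ₗ δ =
      LinearMap.lTensor M ((TensorProduct.comm k _ _).toLinearMap ∘ₗ comul) ∘ₗ δ) (m : M) :
    Mmap k H W ∘ₗ sandwichAct (sandwichAct ν ∘ₗ δ) (δ m) =
      sandwichAct ν (δ m) ∘ₗ Mmap k H W := by
  rw [Mmap_comp_sandwichAct_comp, sandwichAct_comp_Mmap]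
  exact congrArg (sandwichActMmap ν) (LinearMap.congr_fun hδ m)

end Equivariance

section AntipodeComul

open Coalgebra HopfAlgebra WithConv

variable {R C : Type*} [CommSemiring R] [Semiring C] [HopfAlgebra R C]

theorem LinearMap.comul_left_inv :
    toConv (map (antipode R) (antipode R) ∘ₗ (TensorProduct.comm R C C).toLinearMap ∘ₗ comul) *
      toConv (comul (R := R) (A := C)) = 1 := by
  let P := LinearMap.mul' R C ∘ₗ LinearMap.rTensor C (antipode R)
  have hP : P ∘ₗ comul = Algebra.linearMap R C ∘ₗ counit := mul_antipode_rTensor_comul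
  have hμ : LinearMap.mul' R (C ⊗[R] C) ∘ₗ map (map (antipode R) (antipode R)) LinearMap.id =
      map P P ∘ₗ (TensorProduct.tensorTensorTensorComm R C C C C).toLinearMap := by
    ext; simp [P]
  have hε : LinearMap.lTensor C (P ∘ₗ comul) ∘ₗ comul = (TensorProduct.mk R C C).flip 1 := by
    rw [hP, LinearMap.lTensor_comp, LinearMap.comp_assoc, lTensor_counit_comp_comul]
    ext; simp
  have hperm : map LinearMap.id P ∘ₗ (TensorProduct.assoc R C C C).toLinearMap ∘ₗ
      LinearMap.rTensor C (TensorProduct.comm R C C).toLinearMap ∘ₗ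
      LinearMap.rTensor C ((TensorProduct.mk R C C).flip 1) = TensorProduct.mk R C C 1 ∘ₗ P := by
    ext; simp [P]
  -- In Sweedler notation: `S h₂ h₃ ⊗ S h₁ h₄ = ε(h₂) 1 ⊗ S h₁ h₃ = 1 ⊗ S h₁ h₂ = ε(h) 1 ⊗ 1`.
  apply WithConv.ext
  calc LinearMap.mul' R (C ⊗[R] C) ∘ₗ
        map (map (antipode R) (antipode R) ∘ₗ (TensorProduct.comm R C C).toLinearMap ∘ₗ comul)
          comul ∘ₗ comul
      = map P P ∘ₗ (TensorProduct.tensorTensorTensorComm R C C C C).toLinearMap ∘ₗ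
          map ((TensorProduct.comm R C C).toLinearMap ∘ₗ comul) comul ∘ₗ comul := by
        rw [← LinearMap.id_comp (comul (R := R) (A := C)), map_comp, LinearMap.id_comp]
        simp only [← LinearMap.comp_assoc, hμ]
    _ = map LinearMap.id P ∘ₗ (TensorProduct.assoc R C C C).toLinearMap ∘ₗ
          LinearMap.rTensor C (TensorProduct.comm R C C).toLinearMap ∘ₗ
          LinearMap.rTensor C (LinearMap.lTensor C (P ∘ₗ comul)) ∘ₗ
          LinearMap.rTensor C comul ∘ₗ comul := by
        simp only [coassoc_simps]
    _ = (TensorProduct.mk R C C 1 ∘ₗ P) ∘ₗ comul := by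
        rw [← hperm, ← hε, LinearMap.rTensor_comp]
        simp only [LinearMap.comp_assoc]
    _ = (1 : WithConv (C →ₗ[R] C ⊗[R] C)).ofConv := by
        rw [LinearMap.comp_assoc, hP]
        ext; simp [Algebra.algebraMap_eq_smul_one, Algebra.TensorProduct.one_def]

theorem HopfAlgebra.comul_comp_antipode : comul ∘ₗ antipode R (A := C) =
    map (antipode R) (antipode R) ∘ₗ (TensorProduct.comm R C C).toLinearMap ∘ₗ comul :=
  congrArg ofConv (left_inv_eq_right_inv LinearMap.comul_left_inv LinearMap.comul_right_inv).symm

end AntipodeComul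

section Bicomodule

open Coalgebra

variable {k H} {M : Type} [AddCommMonoid M] [Module k M]

local notation "α" => LinearEquiv.toLinearMap (TensorProduct.assoc k _ _ _)
local notation "α⁻¹" => LinearEquiv.toLinearMap (LinearEquiv.symm (TensorProduct.assoc k _ _ _))

/-- `m ↦ m₍₋₁₎ ⊗ m₍₀₎ ⊗ m₍₁₎` -/
def bicoaction (r : M →ₗ[k] M ⊗[k] H) (l : M →ₗ[k] H ⊗[k] M) : M →ₗ[k] (H ⊗[k] M) ⊗[k] H :=
  LinearMap.rTensor H l ∘ₗ r

variable (H) in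
/-- `(x ⊗ m) ⊗ y ↦ m ⊗ (S y ⊗ x)` -/
def twistAntipode (M : Type) [AddCommMonoid M] [Module k M] :
    (H ⊗[k] M) ⊗[k] H →ₗ[k] M ⊗[k] (H ⊗[k] H) :=
  LinearMap.lTensor M (LinearMap.rTensor H (HopfAlgebra.antipode k)) ∘ₗ
    LinearMap.lTensor M (TensorProduct.comm k H H).toLinearMap ∘ₗ α ∘ₗ
    LinearMap.rTensor H (TensorProduct.comm k H M).toLinearMap

variable (H) in
/-- `(x ⊗ m) ⊗ y ↦ (x₍₁₎ ⊗ ((x₍₂₎ ⊗ m) ⊗ y₍₁₎)) ⊗ y₍₂₎` -/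
def comulOuter (M : Type) [AddCommMonoid M] [Module k M] :
    (H ⊗[k] M) ⊗[k] H →ₗ[k] (H ⊗[k] ((H ⊗[k] M) ⊗[k] H)) ⊗[k] H :=
  LinearMap.rTensor H α ∘ₗ
    LinearMap.rTensor H (LinearMap.rTensor H (α ∘ₗ LinearMap.rTensor M comul)) ∘ₗ
    α⁻¹ ∘ₗ LinearMap.lTensor _ comul

theorem deltaS_eq_twistAntipode_comp_bicoaction :
    deltaS k H A ρ lco = twistAntipode H A ∘ₗ bicoaction ρ.toLinearMap lco.toLinearMap := rfl

theorem bicoaction_coassoc (r : M →ₗ[k] M ⊗[k] H) (l : M →ₗ[k] H ⊗[k] M)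
    (hr : LinearMap.rTensor H r ∘ₗ r = α⁻¹ ∘ₗ LinearMap.lTensor M comul ∘ₗ r)
    (hl : LinearMap.lTensor H l ∘ₗ l = α ∘ₗ LinearMap.rTensor M comul ∘ₗ l)
    (hrl : α ∘ₗ LinearMap.rTensor H l ∘ₗ r = LinearMap.lTensor H r ∘ₗ l) :
    LinearMap.rTensor H (LinearMap.lTensor H (bicoaction r l)) ∘ₗ bicoaction r l =
      comulOuter H M ∘ₗ bicoaction r l := by
  have hnat : LinearMap.rTensor H (LinearMap.rTensor H l) ∘ₗ α⁻¹ ∘ₗ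
      LinearMap.lTensor M comul ∘ₗ r = α⁻¹ ∘ₗ LinearMap.lTensor _ comul ∘ₗ bicoaction r l := by
    simp only [bicoaction, ← LinearMap.comp_assoc]
    congr 1
    ext m y
    simp [← (ℛ k y).eq, TensorProduct.tmul_sum]
  calc LinearMap.rTensor H (LinearMap.lTensor H (LinearMap.rTensor H l ∘ₗ r)) ∘ₗ
        LinearMap.rTensor H l ∘ₗ r
      = LinearMap.rTensor H (LinearMap.lTensor H (LinearMap.rTensor H l)) ∘ₗ
          LinearMap.rTensor H (LinearMap.lTensor H r ∘ₗ l) ∘ₗ r := by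
        simp only [LinearMap.lTensor_comp, LinearMap.rTensor_comp, LinearMap.comp_assoc]
    _ = LinearMap.rTensor H (LinearMap.lTensor H (LinearMap.rTensor H l) ∘ₗ α) ∘ₗ
          LinearMap.rTensor H (LinearMap.rTensor H l) ∘ₗ LinearMap.rTensor H r ∘ₗ r := by
        simp only [← hrl, LinearMap.rTensor_comp, LinearMap.comp_assoc]
    _ = LinearMap.rTensor H (α ∘ₗ LinearMap.rTensor H (LinearMap.lTensor H l)) ∘ₗ
          LinearMap.rTensor H (LinearMap.rTensor H l) ∘ₗ α⁻¹ ∘ₗ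
          LinearMap.lTensor M comul ∘ₗ r := by
        rw [LinearMap.lTensor_rTensor_comp_assoc, hr]
    _ = LinearMap.rTensor H α ∘ₗ
          LinearMap.rTensor H (LinearMap.rTensor H (LinearMap.lTensor H l ∘ₗ l)) ∘ₗ
          α⁻¹ ∘ₗ LinearMap.lTensor M comul ∘ₗ r := by
        simp only [LinearMap.rTensor_comp, LinearMap.comp_assoc]
    _ = comulOuter H M ∘ₗ bicoaction r l := by
        rw [hl]
        simp only [comulOuter, LinearMap.rTensor_comp, LinearMap.comp_assoc, hnat]

theorem rTensor_comp_twistAntipode {N : Type} [AddCommMonoid N] [Module k N] (f : M →ₗ[k] N) :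
    LinearMap.rTensor _ f ∘ₗ twistAntipode H M =
      twistAntipode H N ∘ₗ LinearMap.rTensor H (LinearMap.lTensor H f) := by
  ext; simp [twistAntipode]

theorem assoc_comp_rTensor_twistAntipode_comp_twistAntipode_comp_comulOuter :
    α ∘ₗ LinearMap.rTensor _ (twistAntipode H M) ∘ₗ twistAntipode H ((H ⊗[k] M) ⊗[k] H) ∘ₗ
        comulOuter H M =
      LinearMap.lTensor M ((TensorProduct.comm k _ _).toLinearMap ∘ₗ comul) ∘ₗ
        twistAntipode H M := by
  have hS (y : H) : comul (HopfAlgebra.antipode k y) =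
      TensorProduct.map (HopfAlgebra.antipode k) (HopfAlgebra.antipode k)
        (TensorProduct.comm k H H (comul y)) :=
    LinearMap.congr_fun HopfAlgebra.comul_comp_antipode y
  ext x m y
  simp [twistAntipode, comulOuter, hS, ← (ℛ k x).eq, ← (ℛ k y).eq, TensorProduct.sum_tmul,
    TensorProduct.tmul_sum]
  exact Finset.sum_comm

theorem twistAntipode_bicoaction_coassoc (r : M →ₗ[k] M ⊗[k] H) (l : M →ₗ[k] H ⊗[k] M)
    (hr : LinearMap.rTensor H r ∘ₗ r = α⁻¹ ∘ₗ LinearMap.lTensor M comul ∘ₗ r)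
    (hl : LinearMap.lTensor H l ∘ₗ l = α ∘ₗ LinearMap.rTensor M comul ∘ₗ l)
    (hrl : α ∘ₗ LinearMap.rTensor H l ∘ₗ r = LinearMap.lTensor H r ∘ₗ l) :
    α ∘ₗ LinearMap.rTensor _ (twistAntipode H M ∘ₗ bicoaction r l) ∘ₗ
        twistAntipode H M ∘ₗ bicoaction r l =
      LinearMap.lTensor M ((TensorProduct.comm k _ _).toLinearMap ∘ₗ comul) ∘ₗ
        twistAntipode H M ∘ₗ bicoaction r l := by
  have hcomul := assoc_comp_rTensor_twistAntipode_comp_twistAntipode_comp_comulOuter (k := k)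
    (H := H) (M := M)
  rw [LinearMap.rTensor_comp]
  simp only [LinearMap.comp_assoc]
  rw [← LinearMap.comp_assoc (bicoaction r l) (twistAntipode H M), rTensor_comp_twistAntipode,
    LinearMap.comp_assoc, bicoaction_coassoc r l hr hl hrl]
  simp only [← LinearMap.comp_assoc] at hcomul ⊢
  rw [hcomul]

end Bicomodule

variable (N : Type) [AddCommGroup N] [Module k N] [Module A N]
  [IsScalarTower k A N] [SMulCommClass k A N]

theorem stmt9
    (hρ_coassoc : (LinearMap.rTensor H ρ.toLinearMap) ∘ₗ ρ.toLinearMap =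
      (TensorProduct.assoc k A H H).symm.toLinearMap ∘ₗ
        (LinearMap.lTensor A Coalgebra.comul) ∘ₗ ρ.toLinearMap)
    (hlco_coassoc : (LinearMap.lTensor H lco.toLinearMap) ∘ₗ lco.toLinearMap =
      (TensorProduct.assoc k H H A).toLinearMap ∘ₗ
        (LinearMap.rTensor A Coalgebra.comul) ∘ₗ lco.toLinearMap)
    (hcommute : (TensorProduct.assoc k H A H).toLinearMap ∘ₗ
        (LinearMap.rTensor H lco.toLinearMap) ∘ₗ ρ.toLinearMap =
      (LinearMap.lTensor H ρ.toLinearMap) ∘ₗ lco.toLinearMap) :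
    -- (i) `m` is `A`-linear, where `Hom_k(H, N)` carries `liftAct (csmul)` and
    -- `Hom_k(H, Hom_k(H, N))` carries the same construction applied to that `A`-module
    (∀ a : A,
      Mmap k H N ∘ₗ
          liftAct k H A ρ lco (H →ₗ[k] N) (liftAct k H A ρ lco N (csmul k A N)) a =
        liftAct k H A ρ lco N (csmul k A N) a ∘ₗ Mmap k H N)
    -- (ii) the unit laws
    ∧ (∀ φ : H →ₗ[k] N, Mmap k H N (unitMap k H (H →ₗ[k] N) φ) = φ)
    ∧ (∀ φ : H →ₗ[k] N, Mmap k H N (unitMap k H N ∘ₗ φ) = φ)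
    -- (iii) associativity of `m`
    ∧ (∀ Ψ : H →ₗ[k] (H →ₗ[k] (H →ₗ[k] N)),
        Mmap k H N (Mmap k H N ∘ₗ Ψ) = Mmap k H N (Mmap k H (H →ₗ[k] N) Ψ)) := by
  refine ⟨fun a => ?_, Mmap_unitMap, Mmap_unitMap_comp, Mmap_Mmap_comp⟩
  rw [liftAct_eq_sandwichAct_comp, liftAct_eq_sandwichAct_comp,
    deltaS_eq_twistAntipode_comp_bicoaction]
  exact Mmap_comp_sandwichAct_of_coassoc _ _
    (twistAntipode_bicoaction_coassoc _ _ hρ_coassoc hlco_coassoc hcommute) a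

end
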